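/- For the Dyck path recursion with general M: define f_k for k ∈ ℤ^M by f_0 = -4, f_k = 0 if some k_j < 0, and for k ≠ 0: γ_{k-e₁} f_{k-e₁} + Σ_{i=1}^{M-1} 2(i+1)(kᵢ+1) f_{k - e_{i+1} + e_i} + Σ_{0≤l≤k} f_l f_{k-l} = 0, where γ_k = -1/2 + Σᵢ(1+i/2)kᵢ. Then this recursion has a unique solution (f_k)_{k∈ℕ^M}, and f_k > 0 for all k ≠ 0 with all coordinates nonnegative. -/

import Mathlib

/-- The exponent `γ_k = -1/2 + ∑ᵢ (1 + i/2) kᵢ` (with `1`-based index `i`). -/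
noncomputable def gammaExp {M : ℕ} (k : Fin M → ℤ) : ℝ :=
  -(1 / 2) + ∑ i : Fin M, (1 + ((i : ℕ) + 1 : ℝ) / 2) * (k i : ℝ)

/-- The `i`-th unit vector in `ℤ^M`. -/
def unitVec {M : ℕ} (i : Fin M) : Fin M → ℤ := fun j => if j = i then 1 else 0

/-- The Dyck path amplitude recursion with general `M`:
`f_0 = -4`, `f_k = 0` if some coordinate of `k` is negative, and for `k ≠ 0` nonnegative,
`γ_{k-e₁} f_{k-e₁} + ∑_{i=1}^{M-1} 2(i+1)(kᵢ+1) f_{k-e_{i+1}+e_i} + ∑_{0≤l≤k} f_l f_{k-l} = 0`. -/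
def DyckRecursion {M : ℕ} (hM : 0 < M) (f : (Fin M → ℤ) → ℝ) : Prop :=
  f 0 = -4 ∧
  (∀ k : Fin M → ℤ, (∃ j, k j < 0) → f k = 0) ∧
  (∀ k : Fin M → ℤ, (∀ j, 0 ≤ k j) → k ≠ 0 →
    gammaExp (k - unitVec ⟨0, hM⟩) * f (k - unitVec ⟨0, hM⟩) +
    (∑ i : Fin M, if hi : (i : ℕ) + 1 < M then
        2 * ((i : ℕ) + 2 : ℝ) * ((k i : ℝ) + 1) * f (k - unitVec ⟨(i : ℕ) + 1, hi⟩ + unitVec i)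
      else 0) +
    (∑ l ∈ Fintype.piFinset (fun i => Finset.range ((k i).toNat + 1)),
      f (fun i => (l i : ℤ)) * f (fun i => k i - (l i : ℤ))) = 0)

/-!
Put `weight k = ∑ᵢ (i + 1) kᵢ`. Since `f₀ = -4`, the convolution terms `l = 0` and `l = k` add up
to `-8 f_k`, so for `0 < k` the recursion reads `8 f_k = rhs f k`, and `rhs f k` only involves
values of `f` at weight `< weight k`: `k - e₁` and the shifts `k - e_{i+1} + e_i` have weight
`weight k - 1`, and the remaining convolution indices lie strictly between `0` and `k`. Hence the
iterates `step^[n] f`, `step^[n] g` of the solved recursion agree below weight `n`; iterating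
from `0` stabilises to a fixed point, and two fixed points coincide.

Positivity follows by induction on the weight: every term of `rhs f k` is nonnegative; if
`k₁ ≥ 1` the `γ` term is positive (`γ₀ f₀ = 2`, and `γ_m > 0` for `m > 0`), and if `k₁ = 0`
the shift term at a nonzero coordinate `k_{i+1}` is positive.
-/

open Finset Function

theorem sum_piFinset_range_eq_sum_Icc {ι R : Type*} [Fintype ι] [DecidableEq ι]
    [AddCommMonoid R] {k : ι → ℤ} (hk : 0 ≤ k) (g : (ι → ℤ) → R) :
    ∑ l ∈ Fintype.piFinset (fun i => range ((k i).toNat + 1)), g (fun i => (l i : ℤ)) =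
      ∑ m ∈ Icc 0 k, g m := by
  refine sum_nbij' (fun l i => (l i : ℤ)) (fun m i => (m i).toNat) ?_ ?_ ?_ ?_ (fun _ _ => rfl)
  · intro l hl
    simp only [Fintype.mem_piFinset, mem_range, mem_Icc, Pi.le_def] at hl ⊢
    exact ⟨fun i => by simp, fun i => by have := hl i; have : 0 ≤ k i := hk i; omega⟩
  · intro m hm
    simp only [Fintype.mem_piFinset, mem_range, mem_Icc, Pi.le_def] at hm ⊢
    exact fun i => by have := hm.2 i; omega
  · intro l _
    simp
  · intro m hm
    simp only [mem_Icc, Pi.le_def] at hm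
    funext i
    exact Int.toNat_of_nonneg (hm.1 i)

theorem sum_Icc_mul_sub_eq {α R : Type*} [AddCommGroup α] [PartialOrder α]
    [IsOrderedAddMonoid α] [LocallyFiniteOrder α] [CommSemiring R] {k : α} (hk : 0 < k)
    (g : α → R) :
    ∑ m ∈ Icc 0 k, g m * g (k - m) = 2 * g 0 * g k + ∑ m ∈ Ioo 0 k, g m * g (k - m) := by
  rw [Icc_eq_cons_Ioc hk.le, sum_cons, Ioc_eq_cons_Ioo hk, sum_cons, sub_zero, sub_self]
  ring

namespace Dyck

variable {M : ℕ}

def weight (k : Fin M → ℤ) : ℤ := ∑ i : Fin M, ((i : ℕ) + 1 : ℤ) * k i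

theorem weight_add (k l : Fin M → ℤ) : weight (k + l) = weight k + weight l := by
  simp [weight, mul_add, sum_add_distrib]

theorem weight_sub (k l : Fin M → ℤ) : weight (k - l) = weight k - weight l := by
  simp [weight, mul_sub, sum_sub_distrib]

theorem weight_unitVec (i : Fin M) : weight (unitVec i) = (i : ℕ) + 1 := by
  simp [weight, unitVec]

theorem weight_strictMono : StrictMono (weight (M := M)) := by
  intro l k hlk
  obtain ⟨hle, j, hj⟩ := Pi.lt_def.1 hlk
  exact sum_lt_sum (fun i _ => by have := hle i; gcongr) ⟨j, mem_univ j, by gcongr⟩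

theorem weight_zero : weight (0 : Fin M → ℤ) = 0 := by simp [weight]

theorem exists_neg_of_weight_neg {k : Fin M → ℤ} (hk : weight k < 0) : ∃ j, k j < 0 := by
  by_contra! h
  exact hk.not_ge (weight_zero ▸ weight_strictMono.monotone h)

theorem weight_sub_unitVec_zero (hM : 0 < M) (k : Fin M → ℤ) :
    weight (k - unitVec ⟨0, hM⟩) = weight k - 1 := by
  simp [weight_sub, weight_unitVec]

theorem weight_shift (k : Fin M → ℤ) (i : Fin M) (hi : (i : ℕ) + 1 < M) :
    weight (k - unitVec ⟨(i : ℕ) + 1, hi⟩ + unitVec i) = weight k - 1 := by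
  simp only [weight_add, weight_sub, weight_unitVec]
  push_cast
  ring

theorem gammaExp_pos {m : Fin M → ℤ} (hm : 0 < m) : 0 < gammaExp m := by
  obtain ⟨hle, j, hj⟩ := Pi.lt_def.1 hm
  have hm' : ∀ i, (0 : ℝ) ≤ m i := fun i => by exact_mod_cast hle i
  have hj' : (1 : ℝ) ≤ m j := by exact_mod_cast hj
  have hsum := single_le_sum (f := fun i : Fin M => (1 + ((i : ℕ) + 1 : ℝ) / 2) * m i)
    (fun i _ => by have := hm' i; positivity) (mem_univ j)
  have hj_coeff : (1 : ℝ) ≤ 1 + ((j : ℕ) + 1 : ℝ) / 2 := by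
    have : (0 : ℝ) ≤ (j : ℕ) := Nat.cast_nonneg _
    linarith
  unfold gammaExp
  nlinarith

def shiftTerm (f : (Fin M → ℤ) → ℝ) (k : Fin M → ℤ) (i : Fin M) : ℝ :=
  if hi : (i : ℕ) + 1 < M then
    2 * ((i : ℕ) + 2 : ℝ) * ((k i : ℝ) + 1) * f (k - unitVec ⟨(i : ℕ) + 1, hi⟩ + unitVec i)
  else 0

noncomputable def rhs (hM : 0 < M) (f : (Fin M → ℤ) → ℝ) (k : Fin M → ℤ) : ℝ :=
  gammaExp (k - unitVec ⟨0, hM⟩) * f (k - unitVec ⟨0, hM⟩) + ∑ i, shiftTerm f k i +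
    ∑ m ∈ Ioo 0 k, f m * f (k - m)

noncomputable def step (hM : 0 < M) (f : (Fin M → ℤ) → ℝ) (k : Fin M → ℤ) : ℝ :=
  if ∃ j, k j < 0 then 0 else if k = 0 then -4 else rhs hM f k / 8

theorem dyckRecursion_iff {hM : 0 < M} {f : (Fin M → ℤ) → ℝ} :
    DyckRecursion hM f ↔ f 0 = -4 ∧ (∀ k : Fin M → ℤ, (∃ j, k j < 0) → f k = 0) ∧
      ∀ k, 0 < k → 8 * f k = rhs hM f k := by
  refine and_congr_right fun hf0 => and_congr_right fun _ => forall_congr' fun k => ?_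
  rw [lt_iff_le_and_ne, and_imp, ne_comm]
  refine imp_congr_right fun hk => imp_congr_right fun hk0 => ?_
  have hconv : ∑ l ∈ Fintype.piFinset (fun i => range ((k i).toNat + 1)),
      f (fun i => (l i : ℤ)) * f (fun i => k i - (l i : ℤ)) = ∑ m ∈ Icc 0 k, f m * f (k - m) :=
    sum_piFinset_range_eq_sum_Icc hk (fun m => f m * f (k - m))
  rw [hconv, sum_Icc_mul_sub_eq (lt_of_le_of_ne hk hk0), hf0, rhs]
  unfold shiftTerm
  constructor <;> intro h <;> linarith

theorem dyckRecursion_iff_isFixedPt {hM : 0 < M} {f : (Fin M → ℤ) → ℝ} :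
    DyckRecursion hM f ↔ IsFixedPt (step hM) f := by
  rw [dyckRecursion_iff, IsFixedPt, funext_iff]
  constructor
  · rintro ⟨hf0, hneg, hrec⟩ k
    unfold step
    split_ifs with hk hk0
    · exact (hneg k hk).symm
    · rw [hk0, hf0]
    · have := hrec k (lt_of_le_of_ne (fun j => not_lt.1 fun h => hk ⟨j, h⟩) (Ne.symm hk0))
      linarith
  · intro h
    refine ⟨by rw [← h 0, step]; simp, fun k hk => by rw [← h k, step, if_pos hk], fun k hk => ?_⟩
    have hnn : ¬ ∃ j, k j < 0 := fun ⟨j, hj⟩ => (hk.le j).not_gt hj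
    rw [← h k, step, if_neg hnn, if_neg hk.ne']
    ring

variable {hM : 0 < M} {f g : (Fin M → ℤ) → ℝ}

theorem step_of_exists_neg {k : Fin M → ℤ} (hk : ∃ j, k j < 0) : step hM f k = 0 := by
  rw [step, if_pos hk]

theorem rhs_congr {k : Fin M → ℤ} (hfg : Set.EqOn f g {m | weight m < weight k}) :
    rhs hM f k = rhs hM g k := by
  have hlt : ∀ m, m < k → m ∈ {m | weight m < weight k} := fun m h => weight_strictMono h
  have hshift : ∀ i, shiftTerm f k i = shiftTerm g k i := fun i => by
    unfold shiftTerm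
    split_ifs with hi
    · rw [hfg (by simp [weight_shift])]
    · rfl
  have hconv : ∀ m ∈ Ioo 0 k, f m * f (k - m) = g m * g (k - m) := fun m hm => by
    obtain ⟨hm0, hmk⟩ := mem_Ioo.1 hm
    rw [hfg (hlt m hmk), hfg (hlt _ (sub_lt_self k hm0))]
  rw [rhs, rhs, hfg (by simp [weight_sub_unitVec_zero]), sum_congr rfl fun i _ => hshift i,
    sum_congr rfl hconv]

theorem step_congr {k : Fin M → ℤ} (hfg : Set.EqOn f g {m | weight m < weight k}) :
    step hM f k = step hM g k := by
  rw [step, step, rhs_congr hfg]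

theorem eqOn_iterate_step (hfg : Set.EqOn f g {m | weight m < 0}) (n : ℕ) :
    Set.EqOn ((step hM)^[n] f) ((step hM)^[n] g) {m | weight m < n} := by
  induction n with
  | zero => exact hfg
  | succ n ih =>
    intro k hk
    simp only [iterate_succ_apply']
    exact step_congr (ih.mono fun m hm => by simp only [Set.mem_ofPred_eq] at hk hm ⊢; omega)

theorem eqOn_weight_neg (hf : ∀ k : Fin M → ℤ, (∃ j, k j < 0) → f k = 0)
    (hg : ∀ k : Fin M → ℤ, (∃ j, k j < 0) → g k = 0) : Set.EqOn f g {m | weight m < 0} :=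
  fun _ hk => by rw [hf _ (exists_neg_of_weight_neg hk), hg _ (exists_neg_of_weight_neg hk)]

theorem iterate_step_zero_of_exists_neg (n : ℕ) {k : Fin M → ℤ} (hk : ∃ j, k j < 0) :
    (step hM)^[n] 0 k = 0 := by
  cases n with
  | zero => rfl
  | succ n => rw [iterate_succ_apply', step_of_exists_neg hk]

theorem iterate_step_zero_congr {a b : ℕ} {k : Fin M → ℤ} (ha : weight k < a)
    (hb : weight k < b) : (step hM)^[a] 0 k = (step hM)^[b] 0 k := by
  wlog hab : a ≤ b generalizing a b
  · exact (this hb ha (by omega)).symm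
  obtain ⟨c, rfl⟩ := Nat.exists_eq_add_of_le hab
  rw [iterate_add_apply]
  exact eqOn_iterate_step (eqOn_weight_neg (fun _ _ => rfl)
    (fun _ => iterate_step_zero_of_exists_neg c)) a ha

variable (hM) in
noncomputable def sol (k : Fin M → ℤ) : ℝ := (step hM)^[(weight k).toNat + 1] 0 k

variable (hM) in
theorem isFixedPt_sol : IsFixedPt (step hM) (sol hM) := by
  funext k
  set N := (weight k).toNat + 1
  have hagree : Set.EqOn (sol hM) ((step hM)^[N] 0) {m | weight m < weight k} :=
    fun m (hm : weight m < weight k) => iterate_step_zero_congr (by omega) (by omega)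
  rw [step_congr hagree, ← iterate_succ_apply' (step hM)]
  exact (iterate_step_zero_congr (by omega) (by omega)).symm

theorem eq_of_isFixedPt_step (hf : IsFixedPt (step hM) f) (hg : IsFixedPt (step hM) g) :
    f = g := by
  have hneg : ∀ h : (Fin M → ℤ) → ℝ, IsFixedPt (step hM) h → ∀ k : Fin M → ℤ,
      (∃ j, k j < 0) → h k = 0 := fun h hh k hk => by
    rw [← hh, step_of_exists_neg hk]
  funext k
  have := eqOn_iterate_step (hM := hM) (eqOn_weight_neg (hneg f hf) (hneg g hg))
    ((weight k).toNat + 1) (x := k) (by simp only [Set.mem_ofPred_eq]; omega)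
  rwa [iterate_fixed hf, iterate_fixed hg] at this

theorem zero_lt_shift {k : Fin M → ℤ} (hk : 0 ≤ k) {i : Fin M} (hi : (i : ℕ) + 1 < M)
    (hki : 0 < k ⟨(i : ℕ) + 1, hi⟩) : 0 < k - unitVec ⟨(i : ℕ) + 1, hi⟩ + unitVec i := by
  have hne : i ≠ ⟨(i : ℕ) + 1, hi⟩ := Fin.ne_of_val_ne (by simp)
  refine Pi.lt_def.2 ⟨fun j => ?_, i, by have := hk i; simp [unitVec, hne]; omega⟩
  have : 0 ≤ k j := hk j
  simp only [Pi.zero_apply, Pi.add_apply, Pi.sub_apply, unitVec]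
  split_ifs with h1 h2
  · exact absurd (h2.symm.trans h1) hne
  · rw [h1]; omega
  all_goals omega

theorem shiftTerm_nonneg (hneg : ∀ k : Fin M → ℤ, (∃ j, k j < 0) → f k = 0) {k : Fin M → ℤ}
    (hk : 0 ≤ k) (ih : ∀ m, 0 < m → weight m < weight k → 0 < f m) (i : Fin M) :
    0 ≤ shiftTerm f k i := by
  unfold shiftTerm
  split_ifs with hi
  · have hki : (0 : ℝ) ≤ k i := by exact_mod_cast hk i
    rcases (hk ⟨(i : ℕ) + 1, hi⟩).eq_or_lt with h | h
    · rw [hneg _ ⟨⟨(i : ℕ) + 1, hi⟩, by simp [unitVec, ← h, Fin.ext_iff]⟩, mul_zero]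
    · have := ih _ (zero_lt_shift hk hi h) (by simp [weight_shift])
      positivity
  · rfl

theorem shiftTerm_pos {k : Fin M → ℤ} (hk : 0 ≤ k)
    (ih : ∀ m, 0 < m → weight m < weight k → 0 < f m) {i : Fin M} (hi : (i : ℕ) + 1 < M)
    (hki : 0 < k ⟨(i : ℕ) + 1, hi⟩) : 0 < shiftTerm f k i := by
  have := ih _ (zero_lt_shift hk hi hki) (by simp [weight_shift])
  have hki : (0 : ℝ) ≤ k i := by exact_mod_cast hk i
  rw [shiftTerm, dif_pos hi]
  positivity

theorem gammaTerm_pos (hf0 : f 0 = -4) {k : Fin M → ℤ} (hk : 0 ≤ k)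
    (ih : ∀ m, 0 < m → weight m < weight k → 0 < f m) (hk0 : 0 < k ⟨0, hM⟩) :
    0 < gammaExp (k - unitVec ⟨0, hM⟩) * f (k - unitVec ⟨0, hM⟩) := by
  have hnn : 0 ≤ k - unitVec ⟨0, hM⟩ := fun j => by
    have : 0 ≤ k j := hk j
    by_cases hj : j = ⟨0, hM⟩
    · subst hj; simp [unitVec]; omega
    · simp [unitVec, hj, this]
  rcases hnn.eq_or_lt with h | h
  · rw [← h, hf0]
    norm_num [gammaExp]
  · exact mul_pos (gammaExp_pos h) (ih _ h (by simp [weight_sub_unitVec_zero]))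

theorem rhs_pos (hf0 : f 0 = -4) (hneg : ∀ k : Fin M → ℤ, (∃ j, k j < 0) → f k = 0)
    {k : Fin M → ℤ} (hk : 0 < k) (ih : ∀ m, 0 < m → weight m < weight k → 0 < f m) :
    0 < rhs hM f k := by
  have hconv : 0 ≤ ∑ m ∈ Ioo 0 k, f m * f (k - m) := sum_nonneg fun m hm => by
    obtain ⟨hm0, hmk⟩ := mem_Ioo.1 hm
    exact mul_nonneg (ih m hm0 (weight_strictMono hmk)).le
      (ih _ (sub_pos.2 hmk) (weight_strictMono (sub_lt_self k hm0))).le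
  have hshift : 0 ≤ ∑ i, shiftTerm f k i := sum_nonneg fun i _ => shiftTerm_nonneg hneg hk.le ih i
  rw [rhs]
  rcases (hk.le ⟨0, hM⟩).eq_or_lt with h0 | h0
  · have hA : f (k - unitVec ⟨0, hM⟩) = 0 := hneg _ ⟨⟨0, hM⟩, by simp [unitVec, ← h0]⟩
    obtain ⟨j, hj⟩ := (Pi.lt_def.1 hk).2
    have hj0 : (j : ℕ) ≠ 0 := fun h => by
      rw [show j = ⟨0, hM⟩ from Fin.ext h, ← h0] at hj
      exact lt_irrefl _ hj
    obtain ⟨i, hi, rfl⟩ : ∃ (i : Fin M) (hi : (i : ℕ) + 1 < M), j = ⟨(i : ℕ) + 1, hi⟩ :=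
      ⟨⟨j - 1, by omega⟩, by simp; omega, Fin.ext (by simp; omega)⟩
    have : 0 < ∑ i, shiftTerm f k i := sum_pos' (fun i _ => shiftTerm_nonneg hneg hk.le ih i)
      ⟨i, mem_univ i, shiftTerm_pos hk.le ih hi hj⟩
    rw [hA, mul_zero]
    linarith
  · linarith [gammaTerm_pos hf0 hk.le ih h0]

theorem pos_of_dyckRecursion (hf : DyckRecursion hM f) {k : Fin M → ℤ} (hk : 0 < k) : 0 < f k := by
  obtain ⟨hf0, hneg, hrec⟩ := dyckRecursion_iff.1 hf
  induction hn : (weight k).toNat using Nat.strong_induction_on generalizing k with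
  | _ n ih =>
    have hwk : 0 < weight k := weight_zero (M := M) ▸ weight_strictMono hk
    have := rhs_pos (hM := hM) hf0 hneg hk fun m hm hlt => ih _ (by omega) hm rfl
    linarith [hrec k hk]

end Dyck

theorem dyck_recursion_unique_and_positive (M : ℕ) (hM : 0 < M) :
    (∃! f : (Fin M → ℤ) → ℝ, DyckRecursion hM f) ∧
    (∀ f : (Fin M → ℤ) → ℝ, DyckRecursion hM f →
      ∀ k : Fin M → ℤ, (∀ j, 0 ≤ k j) → k ≠ 0 → 0 < f k) := by
  refine ⟨⟨Dyck.sol hM, Dyck.dyckRecursion_iff_isFixedPt.2 (Dyck.isFixedPt_sol hM), fun g hg => ?_⟩,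
    fun f hf k hk hk0 => Dyck.pos_of_dyckRecursion hf (lt_of_le_of_ne hk (Ne.symm hk0))⟩
  exact Dyck.eq_of_isFixedPt_step (Dyck.dyckRecursion_iff_isFixedPt.1 hg) (Dyck.isFixedPt_sol hM)
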